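/- arXiv:1805.02311 — 4 statements merged into one kernel-verified Lean document; each statement's English description precedes it below -/
import Mathlib

section
/- Every occupational measure generated by a y₀-admissible T-periodic admissible pair belongs to W₁(y₀). That is, if u is a T-periodic control and y(t) = y(t, y₀, u) is a corresponding T-periodic solution of y' = f(y,u) with y(t) ∈ Y for all t, and γ is the occupational measure of (y(·),u(·)) on [0,T], then γ ∈ W and there exists a finite nonnegative measure ξ on Y×U with ∫(φ(y)−φ(y₀)) dγ = ∫∇φ(y)·f(y,u) dξ for all C¹ functions φ. -/
/-!
Along a trajectory, `φ (y t)` has derivative `Dφ(y t) f(y t, u t)`. Integrating over one period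
gives `φ (y T) - φ (y 0) = 0`, which is `γ ∈ W`. Integrating `φ (y t) - φ (y 0)` over `[0, T]` by
parts gives `∫₀ᵀ (T - t) Dφ(y t) f(y t, u t) dt`, so the push-forward along `t ↦ (y t, u t)` of
the time measure with density `(T - t) / T` on `[0, T]` represents `γ` in `W₁(y₀)`.
-/

open MeasureTheory Set

theorem intervalIntegrable_comp_prodMk {E U : Type*} [TopologicalSpace E] [MeasurableSpace E]
    [BorelSpace E] [TopologicalSpace U] [MeasurableSpace U] [CompactSpace U]
    [OpensMeasurableSpace (E × U)] {q : E × U → ℝ} (hq : Continuous q) {y : ℝ → E}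
    (hy : Continuous y) {u : ℝ → U} (hu : Measurable u) (a b : ℝ) :
    IntervalIntegrable (fun t => q (y t, u t)) volume a b := by
  obtain ⟨C, hC⟩ := ((isCompact_uIcc.image hy).prod isCompact_univ).exists_bound_of_continuousOn
    hq.continuousOn
  rw [intervalIntegrable_iff]
  refine Measure.integrableOn_of_bounded (M := C) measure_Ioc_lt_top.ne
    (hq.measurable.comp (hy.measurable.prodMk hu)).aestronglyMeasurable ?_
  filter_upwards [ae_restrict_mem measurableSet_uIoc] with t ht
  exact hC _ ⟨mem_image_of_mem y (uIoc_subset_uIcc ht), mem_univ _⟩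

theorem intervalIntegral.integral_sub_left_eq_integral_mul_deriv {F g : ℝ → ℝ} {a b : ℝ}
    (hF : ∀ t ∈ uIcc a b, HasDerivAt F (g t) t) (hg : IntervalIntegrable g volume a b) :
    ∫ t in a..b, (F t - F a) = ∫ t in a..b, (b - t) * g t := by
  have parts := integral_mul_deriv_eq_deriv_mul (fun t ht => (hF t ht).sub_const (F a))
    (fun t _ => (hasDerivAt_id t).sub_const b) hg intervalIntegrable_const
  simp only [mul_one, sub_self, zero_mul, mul_zero, id] at parts
  rw [parts, zero_sub, ← integral_neg]
  congr 1 with t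
  ring

section ControlSystem

variable {E U : Type*} [NormedAddCommGroup E] [NormedSpace ℝ E]
  {f : E → U → E} {φ : E → ℝ}

theorem hasDerivAt_comp_trajectory (hφ : ContDiff ℝ 1 φ) {y : ℝ → E} {u : ℝ → U}
    (hode : ∀ t, HasDerivAt y (f (y t) (u t)) t) (t : ℝ) :
    HasDerivAt (fun s => φ (y s)) (fderiv ℝ φ (y t) (f (y t) (u t))) t :=
  ((hφ.differentiable one_ne_zero) (y t)).hasFDerivAt.comp_hasDerivAt t (hode t)

variable [TopologicalSpace U]

theorem continuous_fderiv_apply_vectorField (hφ : ContDiff ℝ 1 φ)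
    (hf : Continuous fun p : E × U => f p.1 p.2) :
    Continuous fun p : E × U => fderiv ℝ φ p.1 (f p.1 p.2) :=
  ((hφ.continuous_fderiv one_ne_zero).comp continuous_fst).clm_apply hf

variable [MeasurableSpace E] [BorelSpace E] [MeasurableSpace U] [CompactSpace U]
  [OpensMeasurableSpace (E × U)] {y : ℝ → E} {u : ℝ → U}

theorem intervalIntegrable_fderiv_apply_trajectory (hφ : ContDiff ℝ 1 φ)
    (hf : Continuous fun p : E × U => f p.1 p.2) (hu : Measurable u)
    (hode : ∀ t, HasDerivAt y (f (y t) (u t)) t) (a b : ℝ) :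
    IntervalIntegrable (fun t => fderiv ℝ φ (y t) (f (y t) (u t))) volume a b :=
  intervalIntegrable_comp_prodMk (continuous_fderiv_apply_vectorField hφ hf)
    (continuous_iff_continuousAt.2 fun t => (hode t).continuousAt) hu a b

theorem integral_fderiv_apply_trajectory (hφ : ContDiff ℝ 1 φ)
    (hf : Continuous fun p : E × U => f p.1 p.2) (hu : Measurable u)
    (hode : ∀ t, HasDerivAt y (f (y t) (u t)) t) (a b : ℝ) :
    ∫ t in a..b, fderiv ℝ φ (y t) (f (y t) (u t)) = φ (y b) - φ (y a) :=
  intervalIntegral.integral_eq_sub_of_hasDerivAt (fun t _ => hasDerivAt_comp_trajectory hφ hode t)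
    (intervalIntegrable_fderiv_apply_trajectory hφ hf hu hode a b)

theorem integral_sub_apply_trajectory_eq_integral_mul (hφ : ContDiff ℝ 1 φ)
    (hf : Continuous fun p : E × U => f p.1 p.2) (hu : Measurable u)
    (hode : ∀ t, HasDerivAt y (f (y t) (u t)) t) (T : ℝ) :
    ∫ t in 0..T, (φ (y t) - φ (y 0)) = ∫ t in 0..T, (T - t) * fderiv ℝ φ (y t) (f (y t) (u t)) :=
  intervalIntegral.integral_sub_left_eq_integral_mul_deriv
    (fun t _ => hasDerivAt_comp_trajectory hφ hode t)
    (intervalIntegrable_fderiv_apply_trajectory hφ hf hu hode 0 T)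

end ControlSystem

noncomputable def weightedOccupationalMeasure {X : Type*} [MeasurableSpace X] (T : ℝ)
    (c : ℝ → X) : Measure X :=
  ((volume.restrict (Ioc 0 T)).withDensity fun s => ENNReal.ofReal ((T - s) / T)).map c

section WeightedOccupationalMeasure

variable {X : Type*} [MeasurableSpace X] {T : ℝ} {c : ℝ → X}

instance isFiniteMeasure_weightedOccupationalMeasure : IsFiniteMeasure (weightedOccupationalMeasure T c) := by
  have : IsFiniteMeasure ((volume.restrict (Ioc 0 T)).withDensity
      fun s => ENNReal.ofReal ((T - s) / T)) :=
    isFiniteMeasure_withDensity_ofReal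
      (((continuous_const.sub continuous_id).div_const T).integrableOn_Ioc).2
  unfold weightedOccupationalMeasure
  infer_instance

theorem integral_weightedOccupationalMeasure (hT : 0 < T) (hc : Measurable c) {q : X → ℝ}
    (hq : AEStronglyMeasurable q (weightedOccupationalMeasure T c)) :
    ∫ x, q x ∂weightedOccupationalMeasure T c = ∫ s in 0..T, (T - s) / T * q (c s) := by
  have hw : Measurable fun s : ℝ => ENNReal.ofReal ((T - s) / T) := by fun_prop
  rw [weightedOccupationalMeasure, integral_map hc.aemeasurable hq,
    integral_withDensity_eq_integral_toReal_smul hw (ae_of_all _ fun _ => ENNReal.ofReal_lt_top),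
    intervalIntegral.integral_of_le hT.le]
  refine setIntegral_congr_fun measurableSet_Ioc fun s hs => ?_
  rw [ENNReal.toReal_ofReal (div_nonneg (by linarith [hs.2]) hT.le), smul_eq_mul]

end WeightedOccupationalMeasure

theorem periodic_occupational_measure_mem_W1_general
    {m : ℕ} {U : Type} [MetricSpace U] [CompactSpace U] [MeasurableSpace U] [BorelSpace U]
    (f : EuclideanSpace ℝ (Fin m) → U → EuclideanSpace ℝ (Fin m))
    (hf : Continuous (fun p : EuclideanSpace ℝ (Fin m) × U => f p.1 p.2))
    (y0 : EuclideanSpace ℝ (Fin m))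
    (T : ℝ) (hT : 0 < T)
    (u : ℝ → U) (hu : Measurable u)
    (y : ℝ → EuclideanSpace ℝ (Fin m))
    (hyper : Function.Periodic y T)
    (hyinit : y 0 = y0)
    (hode : ∀ t : ℝ, HasDerivAt y (f (y t) (u t)) t)
    (γ : Measure (EuclideanSpace ℝ (Fin m) × U))
    (hγocc : ∀ q : EuclideanSpace ℝ (Fin m) × U → ℝ, Continuous q →
      ∫ p, q p ∂γ = (1 / T) * ∫ t in (0:ℝ)..T, q (y t, u t)) :
    -- γ ∈ W
    (∀ φ : EuclideanSpace ℝ (Fin m) → ℝ, ContDiff ℝ 1 φ →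
      ∫ p, fderiv ℝ φ p.1 (f p.1 p.2) ∂γ = 0) ∧
    -- and γ admits a representing measure ξ, i.e. γ ∈ W₁(y₀)
    (∃ ξ : Measure (EuclideanSpace ℝ (Fin m) × U),
      IsFiniteMeasure ξ ∧
      ∀ φ : EuclideanSpace ℝ (Fin m) → ℝ, ContDiff ℝ 1 φ →
        ∫ p, (φ p.1 - φ y0) ∂γ = ∫ p, fderiv ℝ φ p.1 (f p.1 p.2) ∂ξ) := by
  refine ⟨fun φ hφ => ?_, weightedOccupationalMeasure T fun t => (y t, u t), inferInstance,
    fun φ hφ => ?_⟩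
  · rw [hγocc _ (continuous_fderiv_apply_vectorField hφ hf),
      integral_fderiv_apply_trajectory hφ hf hu hode, hyper.eq, sub_self, mul_zero]
  · have hy : Continuous y := continuous_iff_continuousAt.2 fun t => (hode t).continuousAt
    rw [hγocc (fun p => φ p.1 - φ y0) ((hφ.continuous.comp continuous_fst).sub continuous_const),
      integral_weightedOccupationalMeasure hT (hy.measurable.prodMk hu)
        (continuous_fderiv_apply_vectorField hφ hf).aestronglyMeasurable,
      ← hyinit, integral_sub_apply_trajectory_eq_integral_mul hφ hf hu hode T,
      ← intervalIntegral.integral_const_mul]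
    congr 1 with t
    field_simp

/-- Every occupational measure generated by a y₀-admissible T-periodic pair belongs to W₁(y₀). -/
theorem periodic_occupational_measure_mem_W1
    {m : ℕ} {U : Type} [MetricSpace U] [CompactSpace U] [MeasurableSpace U] [BorelSpace U]
    (Y : Set (EuclideanSpace ℝ (Fin m))) (hY : IsCompact Y)
    (f : EuclideanSpace ℝ (Fin m) → U → EuclideanSpace ℝ (Fin m))
    (hf : Continuous (fun p : EuclideanSpace ℝ (Fin m) × U => f p.1 p.2))
    (hfLip : ∃ L : NNReal, ∀ u : U, LipschitzWith L (fun y => f y u))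
    (y0 : EuclideanSpace ℝ (Fin m)) (hy0 : y0 ∈ Y)
    (T : ℝ) (hT : 0 < T)
    (u : ℝ → U) (hu : Measurable u) (huper : Function.Periodic u T)
    (y : ℝ → EuclideanSpace ℝ (Fin m))
    (hyper : Function.Periodic y T)
    (hyinit : y 0 = y0)
    (hode : ∀ t : ℝ, HasDerivAt y (f (y t) (u t)) t)
    (hYinv : ∀ t : ℝ, y t ∈ Y)
    (γ : Measure (EuclideanSpace ℝ (Fin m) × U))
    (hγprob : IsProbabilityMeasure γ)
    (hγocc : ∀ q : EuclideanSpace ℝ (Fin m) × U → ℝ, Continuous q →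
      ∫ p, q p ∂γ = (1 / T) * ∫ t in (0:ℝ)..T, q (y t, u t)) :
    -- γ ∈ W
    (∀ φ : EuclideanSpace ℝ (Fin m) → ℝ, ContDiff ℝ 1 φ →
      ∫ p, fderiv ℝ φ p.1 (f p.1 p.2) ∂γ = 0) ∧
    -- and γ admits a representing measure ξ, i.e. γ ∈ W₁(y₀)
    (∃ ξ : Measure (EuclideanSpace ℝ (Fin m) × U),
      IsFiniteMeasure ξ ∧
      ∀ φ : EuclideanSpace ℝ (Fin m) → ℝ, ContDiff ℝ 1 φ →
        ∫ p, (φ p.1 - φ y0) ∂γ = ∫ p, fderiv ℝ φ p.1 (f p.1 p.2) ∂ξ) :=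
  periodic_occupational_measure_mem_W1_general f hf y0 T hT u hu y hyper hyinit hode γ hγocc
end

section
/- Upper limit inclusion for occupational measures: assume the viability kernel condition 𝒰(y₀) ≠ ∅. If γ is a weak* limit of occupational measures γ_l ∈ Γ_{T_l}(y₀) with T_l → ∞, and each γ_l lies in W, then γ ∈ W₂(y₀); i.e., there exist finite nonnegative measures ξ_l on Y×U such that ∫(φ(y)−φ(y₀)) dγ = lim_{l→∞} ∫∇φ(y)·f(y,u) dξ_l for all φ ∈ C¹. -/
/-!
Both conditions defining `W` pass to the weak limit: the constraint `∫ ∇φ · f dγ_l = 0` directly,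
the support condition by the portmanteau inequality for the open set `(Y × U)ᶜ`. For `ξ_l` take
the paper's double-integral measure `T⁻¹ ∫₀ᵀ ∫₀ᵗ δ_(y(s), u(s)) ds dt`; exchanging the integrals
makes it the occupational measure of the trajectory with weight `(T - s) / T`. Against `∇φ · f`
its integral is `T⁻¹ ∫₀ᵀ (φ(y(t)) - φ(y₀)) dt = ∫ (φ - φ(y₀)) dγ_l` by the fundamental theorem
of calculus, and this converges to `∫ (φ - φ(y₀)) dγ`.
-/

open MeasureTheory Filter Topology Set

theorem MeasureTheory.ProbabilityMeasure.measure_eq_zero_of_tendsto_of_isOpen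
    {Ω ι : Type*} {L : Filter ι} [L.NeBot] [MeasurableSpace Ω] [TopologicalSpace Ω]
    [OpensMeasurableSpace Ω] [HasOuterApproxClosed Ω]
    {μ : ProbabilityMeasure Ω} {μs : ι → ProbabilityMeasure Ω} (hμs : Tendsto μs L (𝓝 μ))
    {G : Set Ω} (hG : IsOpen G) (h : ∀ᶠ i in L, (μs i : Measure Ω) G = 0) :
    (μ : Measure Ω) G = 0 :=
  nonpos_iff_eq_zero.1 <| calc
    (μ : Measure Ω) G ≤ L.liminf fun i ↦ (μs i : Measure Ω) G :=
      le_liminf_measure_open_of_tendsto hμs hG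
    _ = 0 := by rw [liminf_congr h, liminf_const]

/-- Cauchy's formula for the repeated integral `∫ₐᵇ ∫ₐˣ v'`. -/
theorem intervalIntegral.integral_sub_mul_deriv_eq_integral_sub {v v' : ℝ → ℝ} {a b : ℝ}
    (hv : ∀ x ∈ uIcc a b, HasDerivAt v (v' x) x) (hv' : IntervalIntegrable v' volume a b) :
    ∫ x in a..b, (b - x) * v' x = ∫ x in a..b, (v x - v a) := by
  have := integral_mul_deriv_eq_deriv_mul (u := fun x ↦ b - x) (u' := fun _ ↦ -1)
    (fun x _ ↦ by simpa using (hasDerivAt_id x).const_sub b)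
    (fun x hx ↦ (hv x hx).sub_const (v a)) intervalIntegrable_const hv'
  rw [this, sub_self, sub_self, zero_mul, mul_zero, sub_zero, zero_sub, ← integral_neg]
  simp

theorem ContDiff.continuous_fderiv_fst_apply {E U : Type*} [NormedAddCommGroup E]
    [NormedSpace ℝ E] [TopologicalSpace U] {φ : E → ℝ} (hφ : ContDiff ℝ 1 φ) {f : E → U → E}
    (hf : Continuous fun p : E × U ↦ f p.1 p.2) :
    Continuous fun p : E × U ↦ fderiv ℝ φ p.1 (f p.1 p.2) :=
  ((hφ.continuous_fderiv one_ne_zero).comp continuous_fst).clm_apply hf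

section CumulativeOccupationMeasure

variable {E U : Type*} [MeasurableSpace E] [MeasurableSpace U]

theorem IsCompact.integrableOn_comp_prodMk [TopologicalSpace E] [BorelSpace E]
    [SecondCountableTopology E] [TopologicalSpace U] [OpensMeasurableSpace U]
    [SecondCountableTopology U] [CompactSpace U] {K : Set ℝ} (hK : IsCompact K) {G : E × U → ℝ}
    (hG : Continuous G) {y : ℝ → E} (hy : ContinuousOn y K) {u : ℝ → U} (hu : Measurable u) :
    IntegrableOn (fun s ↦ G (y s, u s)) K := by
  obtain ⟨C, hC⟩ := ((hK.image_of_continuousOn hy).prod isCompact_univ).exists_bound_of_continuousOn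
    hG.continuousOn
  refine .of_bound hK.measure_lt_top ?_ C <| ae_restrict_of_forall_mem hK.measurableSet
    fun s hs ↦ hC _ ⟨mem_image_of_mem y hs, mem_univ _⟩
  exact (hG.measurable.comp_aemeasurable
    ((hy.aemeasurable hK.measurableSet).prodMk hu.aemeasurable)).aestronglyMeasurable

/-- The paper's `ξ_l` for the trajectory `(y, u)` on `[0, T]`. -/
noncomputable def cumulativeOccupationMeasure (T : ℝ) (y : ℝ → E) (u : ℝ → U) : Measure (E × U) :=
  ((volume.restrict (Ioc 0 T)).withDensity fun s ↦ ENNReal.ofReal ((T - s) / T)).map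
    fun s ↦ (y s, u s)

instance (T : ℝ) (y : ℝ → E) (u : ℝ → U) : IsFiniteMeasure (cumulativeOccupationMeasure T y u) :=
  have := isFiniteMeasure_withDensity_ofReal (Continuous.integrableOn_Ioc (μ := volume)
    (a := 0) (b := T) (f := fun s ↦ (T - s) / T) (by fun_prop)).2
  Measure.isFiniteMeasure_map _ _

theorem integral_cumulativeOccupationMeasure {T : ℝ} (hT : 0 ≤ T) {y : ℝ → E} {u : ℝ → U}
    (hyu : AEMeasurable (fun s ↦ (y s, u s)) (volume.restrict (Ioc 0 T))) {G : E × U → ℝ}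
    (hG : AEStronglyMeasurable G (cumulativeOccupationMeasure T y u)) :
    ∫ p, G p ∂cumulativeOccupationMeasure T y u = ∫ s in 0..T, (T - s) / T * G (y s, u s) := by
  rw [cumulativeOccupationMeasure,
    integral_map (hyu.mono_ac (withDensity_absolutelyContinuous _ _)) hG,
    integral_withDensity_eq_integral_toReal_smul (by fun_prop)
      (ae_of_all _ fun _ ↦ ENNReal.ofReal_lt_top),
    intervalIntegral.integral_of_le hT]
  refine setIntegral_congr_fun measurableSet_Ioc fun s hs ↦ ?_
  rw [ENNReal.toReal_ofReal (div_nonneg (sub_nonneg.2 hs.2) hT), smul_eq_mul]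

theorem integral_fderiv_apply_cumulativeOccupationMeasure [NormedAddCommGroup E]
    [NormedSpace ℝ E] [BorelSpace E] [SecondCountableTopology E] [TopologicalSpace U]
    [OpensMeasurableSpace U] [SecondCountableTopology U] [CompactSpace U] {f : E → U → E}
    (hf : Continuous fun p : E × U ↦ f p.1 p.2) {φ : E → ℝ} (hφ : ContDiff ℝ 1 φ) {T : ℝ}
    (hT : 0 < T) {y : ℝ → E} {u : ℝ → U} (hu : Measurable u)
    (hode : ∀ t ∈ Icc 0 T, HasDerivAt y (f (y t) (u t)) t) :
    ∫ p, fderiv ℝ φ p.1 (f p.1 p.2) ∂cumulativeOccupationMeasure T y u =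
      T⁻¹ * ∫ t in 0..T, (φ (y t) - φ (y 0)) := by
  have hG := hφ.continuous_fderiv_fst_apply hf
  have hy : ContinuousOn y (Icc 0 T) := fun t ht ↦ (hode t ht).continuousAt.continuousWithinAt
  have hchain : ∀ t ∈ uIcc 0 T,
      HasDerivAt (fun t ↦ φ (y t)) (fderiv ℝ φ (y t) (f (y t) (u t))) t := by
    intro t ht
    rw [uIcc_of_le hT.le] at ht
    exact (hφ.differentiable one_ne_zero (y t)).hasFDerivAt.comp_hasDerivAt t (hode t ht)
  have hint : IntervalIntegrable (fun t ↦ fderiv ℝ φ (y t) (f (y t) (u t))) volume 0 T :=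
    (intervalIntegrable_iff_integrableOn_Icc_of_le hT.le).2
      (isCompact_Icc.integrableOn_comp_prodMk hG hy hu)
  have hyu : AEMeasurable (fun s ↦ (y s, u s)) (volume.restrict (Ioc 0 T)) :=
    ((hy.mono Ioc_subset_Icc_self).aemeasurable measurableSet_Ioc).prodMk hu.aemeasurable
  rw [integral_cumulativeOccupationMeasure hT.le hyu hG.aestronglyMeasurable,
    ← intervalIntegral.integral_sub_mul_deriv_eq_integral_sub hchain hint,
    ← intervalIntegral.integral_const_mul]
  congr 1 with s
  field_simp

end CumulativeOccupationMeasure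

theorem limsup_occupational_measures_subset_W2_general
    {m : ℕ} {U : Type} [MetricSpace U] [CompactSpace U] [MeasurableSpace U] [BorelSpace U]
    (Y : Set (EuclideanSpace ℝ (Fin m))) (hY : IsCompact Y)
    (f : EuclideanSpace ℝ (Fin m) → U → EuclideanSpace ℝ (Fin m))
    (hf : Continuous (fun p : EuclideanSpace ℝ (Fin m) × U => f p.1 p.2))
    (y0 : EuclideanSpace ℝ (Fin m))
    (T : ℕ → ℝ) (hTpos : ∀ l, 0 < T l)
    (u : ℕ → ℝ → U) (hu : ∀ l, Measurable (u l))
    (y : ℕ → ℝ → EuclideanSpace ℝ (Fin m))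
    (hyinit : ∀ l, y l 0 = y0)
    (hode : ∀ l, ∀ t ∈ Set.Icc 0 (T l), HasDerivAt (y l) (f (y l t) (u l t)) t)
    (γl : ℕ → Measure (EuclideanSpace ℝ (Fin m) × U))
    (hγlprob : ∀ l, IsProbabilityMeasure (γl l))
    (hγlocc : ∀ l, ∀ q : EuclideanSpace ℝ (Fin m) × U → ℝ, Continuous q →
      ∫ p, q p ∂(γl l) = (1 / T l) * ∫ t in (0:ℝ)..(T l), q (y l t, u l t))
    -- each γ_l lies in W
    (hγlW : ∀ l, (γl l) ((Y ×ˢ (univ : Set U))ᶜ) = 0 ∧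
      ∀ φ : EuclideanSpace ℝ (Fin m) → ℝ, ContDiff ℝ 1 φ →
        ∫ p, fderiv ℝ φ p.1 (f p.1 p.2) ∂(γl l) = 0)
    (γ : Measure (EuclideanSpace ℝ (Fin m) × U)) (hγprob : IsProbabilityMeasure γ)
    -- weak* convergence γ_l → γ
    (hconv : ∀ q : EuclideanSpace ℝ (Fin m) × U → ℝ, Continuous q →
      Tendsto (fun l => ∫ p, q p ∂(γl l)) atTop (𝓝 (∫ p, q p ∂γ))) :
    -- γ ∈ W₂(y₀):
    (γ ((Y ×ˢ (univ : Set U))ᶜ) = 0 ∧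
      ∀ φ : EuclideanSpace ℝ (Fin m) → ℝ, ContDiff ℝ 1 φ →
        ∫ p, fderiv ℝ φ p.1 (f p.1 p.2) ∂γ = 0) ∧
    ∃ ξ : ℕ → Measure (EuclideanSpace ℝ (Fin m) × U),
      (∀ l, IsFiniteMeasure (ξ l)) ∧
      ∀ φ : EuclideanSpace ℝ (Fin m) → ℝ, ContDiff ℝ 1 φ →
        Tendsto (fun l => ∫ p, fderiv ℝ φ p.1 (f p.1 p.2) ∂(ξ l)) atTop
          (𝓝 (∫ p, (φ p.1 - φ y0) ∂γ)) := by
  let P : ℕ → ProbabilityMeasure (EuclideanSpace ℝ (Fin m) × U) := fun l ↦ ⟨γl l, hγlprob l⟩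
  have hlim : Tendsto P atTop (𝓝 ⟨γ, hγprob⟩) :=
    ProbabilityMeasure.tendsto_iff_forall_integral_tendsto.2 fun q ↦ hconv q q.continuous
  have hsupp : γ ((Y ×ˢ (univ : Set U))ᶜ) = 0 :=
    ProbabilityMeasure.measure_eq_zero_of_tendsto_of_isOpen hlim
      (hY.isClosed.prod isClosed_univ).isOpen_compl (.of_forall fun l ↦ (hγlW l).1)
  refine ⟨⟨hsupp, fun φ hφ ↦ ?_⟩,
    fun l ↦ cumulativeOccupationMeasure (T l) (y l) (u l), fun _ ↦ inferInstance, fun φ hφ ↦ ?_⟩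
  · exact tendsto_nhds_unique (hconv _ (hφ.continuous_fderiv_fst_apply hf))
      (tendsto_const_nhds.congr fun l ↦ ((hγlW l).2 φ hφ).symm)
  · have hq : Continuous fun p : EuclideanSpace ℝ (Fin m) × U ↦ φ p.1 - φ y0 :=
      (hφ.continuous.comp continuous_fst).sub continuous_const
    refine (hconv _ hq).congr fun l ↦ ?_
    rw [integral_fderiv_apply_cumulativeOccupationMeasure hf hφ (hTpos l) (hu l) (hode l),
      hγlocc l _ hq, hyinit l, one_div]

/-- Upper limit inclusion: any weak* limit of occupational measures γ_l ∈ Γ_{T_l}(y₀)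
with T_l → ∞, each lying in W, belongs to W₂(y₀). -/
theorem limsup_occupational_measures_subset_W2
    {m : ℕ} {U : Type} [MetricSpace U] [CompactSpace U] [MeasurableSpace U] [BorelSpace U]
    (Y : Set (EuclideanSpace ℝ (Fin m))) (hY : IsCompact Y)
    (f : EuclideanSpace ℝ (Fin m) → U → EuclideanSpace ℝ (Fin m))
    (hf : Continuous (fun p : EuclideanSpace ℝ (Fin m) × U => f p.1 p.2))
    (hfLip : ∃ L : NNReal, ∀ u : U, LipschitzWith L (fun y => f y u))
    (y0 : EuclideanSpace ℝ (Fin m)) (hy0 : y0 ∈ Y)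
    (T : ℕ → ℝ) (hTpos : ∀ l, 0 < T l) (hT : Tendsto T atTop atTop)
    (u : ℕ → ℝ → U) (hu : ∀ l, Measurable (u l))
    (y : ℕ → ℝ → EuclideanSpace ℝ (Fin m))
    (hyinit : ∀ l, y l 0 = y0)
    (hode : ∀ l, ∀ t ∈ Set.Icc 0 (T l), HasDerivAt (y l) (f (y l t) (u l t)) t)
    (hYinv : ∀ l, ∀ t ∈ Set.Icc 0 (T l), y l t ∈ Y)
    (γl : ℕ → Measure (EuclideanSpace ℝ (Fin m) × U))
    (hγlprob : ∀ l, IsProbabilityMeasure (γl l))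
    (hγlocc : ∀ l, ∀ q : EuclideanSpace ℝ (Fin m) × U → ℝ, Continuous q →
      ∫ p, q p ∂(γl l) = (1 / T l) * ∫ t in (0:ℝ)..(T l), q (y l t, u l t))
    -- each γ_l lies in W
    (hγlW : ∀ l, (γl l) ((Y ×ˢ (univ : Set U))ᶜ) = 0 ∧
      ∀ φ : EuclideanSpace ℝ (Fin m) → ℝ, ContDiff ℝ 1 φ →
        ∫ p, fderiv ℝ φ p.1 (f p.1 p.2) ∂(γl l) = 0)
    (γ : Measure (EuclideanSpace ℝ (Fin m) × U)) (hγprob : IsProbabilityMeasure γ)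
    -- weak* convergence γ_l → γ
    (hconv : ∀ q : EuclideanSpace ℝ (Fin m) × U → ℝ, Continuous q →
      Tendsto (fun l => ∫ p, q p ∂(γl l)) atTop (𝓝 (∫ p, q p ∂γ))) :
    -- γ ∈ W₂(y₀):
    (γ ((Y ×ˢ (univ : Set U))ᶜ) = 0 ∧
      ∀ φ : EuclideanSpace ℝ (Fin m) → ℝ, ContDiff ℝ 1 φ →
        ∫ p, fderiv ℝ φ p.1 (f p.1 p.2) ∂γ = 0) ∧
    ∃ ξ : ℕ → Measure (EuclideanSpace ℝ (Fin m) × U),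
      (∀ l, IsFiniteMeasure (ξ l)) ∧
      ∀ φ : EuclideanSpace ℝ (Fin m) → ℝ, ContDiff ℝ 1 φ →
        Tendsto (fun l => ∫ p, fderiv ℝ φ p.1 (f p.1 p.2) ∂(ξ l)) atTop
          (𝓝 (∫ p, (φ p.1 - φ y0) ∂γ)) :=
  limsup_occupational_measures_subset_W2_general Y hY f hf y0 T hTpos u hu y hyinit hode γl hγlprob
    hγlocc hγlW γ hγprob hconv
end

section
/- Discounted limit inclusion: if γ_l ∈ W(λ_l, y₀) with λ_l → 0⁺ and γ_l → γ weak*, then γ ∈ W₂(y₀). In particular limsup_{λ→0} W(λ, y₀) ⊂ W₂(y₀). -/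
open MeasureTheory Filter Topology Set

/-! The witness is `ξ_l = λ_l⁻¹ γ_l`. Testing `γ_l ∈ W(λ_l, y₀)` against `φ` gives
`∫ ∇φ · f dξ_l = ∫ (φ - φ(y₀)) dγ_l`, and the right-hand side converges to
`∫ (φ - φ(y₀)) dγ` by weak* convergence. -/

theorem Continuous.integrable_of_measure_compl_eq_zero {X E : Type*} [TopologicalSpace X]
    [T2Space X] [MeasurableSpace X] [OpensMeasurableSpace X] [NormedAddCommGroup E]
    {μ : Measure X} [IsFiniteMeasure μ] {K : Set X} (hK : IsCompact K) (hμK : μ Kᶜ = 0)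
    {g : X → E} (hg : Continuous g) : Integrable g μ := by
  have hμ : μ.restrict K = μ := Measure.restrict_eq_self_of_ae_mem (ae_iff.2 hμK)
  simpa only [IntegrableOn, hμ] using hg.continuousOn.integrableOn_compact (μ := μ) hK

theorem integral_smul_inv_measure_eq_neg_of_integral_add_mul_eq_zero {X : Type*}
    [MeasurableSpace X] {μ : Measure X} {A B : X → ℝ} (hA : Integrable A μ)
    (hB : Integrable B μ) {c : ℝ} (hc : 0 < c) (h : ∫ x, (A x + c * B x) ∂μ = 0) :
    ∫ x, A x ∂(c⁻¹.toNNReal • μ) = -∫ x, B x ∂μ := by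
  rw [integral_add hA (hB.const_mul c), integral_const_mul] at h
  rw [integral_smul_nnreal_measure, NNReal.smul_def, Real.coe_toNNReal _ (inv_nonneg.2 hc.le),
    smul_eq_mul]
  field_simp
  linarith

theorem limsup_discounted_W_subset_W2_general
    {m : ℕ} {U : Type} [MetricSpace U] [CompactSpace U] [MeasurableSpace U] [BorelSpace U]
    (Y : Set (EuclideanSpace ℝ (Fin m))) (hY : IsCompact Y)
    (f : EuclideanSpace ℝ (Fin m) → U → EuclideanSpace ℝ (Fin m))
    (hf : Continuous (fun p : EuclideanSpace ℝ (Fin m) × U => f p.1 p.2))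
    (y0 : EuclideanSpace ℝ (Fin m))
    (lam : ℕ → ℝ) (hlampos : ∀ l, 0 < lam l)
    (γl : ℕ → Measure (EuclideanSpace ℝ (Fin m) × U))
    (hγlprob : ∀ l, IsProbabilityMeasure (γl l))
    (hγlsupp : ∀ l, (γl l) ((Y ×ˢ (univ : Set U))ᶜ) = 0)
    -- γ_l ∈ W(λ_l, y₀)
    (hγlW : ∀ l, ∀ φ : EuclideanSpace ℝ (Fin m) → ℝ, ContDiff ℝ 1 φ →
      ∫ p, (fderiv ℝ φ p.1 (f p.1 p.2) + lam l * (φ y0 - φ p.1)) ∂(γl l) = 0)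
    (γ : Measure (EuclideanSpace ℝ (Fin m) × U))
    -- weak* convergence γ_l → γ
    (hconv : ∀ q : EuclideanSpace ℝ (Fin m) × U → ℝ, Continuous q →
      Tendsto (fun l => ∫ p, q p ∂(γl l)) atTop (𝓝 (∫ p, q p ∂γ))) :
    -- γ ∈ W₂(y₀)
    ∃ ξ : ℕ → Measure (EuclideanSpace ℝ (Fin m) × U),
      (∀ l, IsFiniteMeasure (ξ l)) ∧
      ∀ φ : EuclideanSpace ℝ (Fin m) → ℝ, ContDiff ℝ 1 φ →
        Tendsto (fun l => ∫ p, fderiv ℝ φ p.1 (f p.1 p.2) ∂(ξ l)) atTop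
          (𝓝 (∫ p, (φ p.1 - φ y0) ∂γ)) := by
  refine ⟨fun l => (lam l)⁻¹.toNNReal • γl l, fun l => ?_, fun φ hφ => ?_⟩
  · have := hγlprob l
    infer_instance
  have hK : IsCompact (Y ×ˢ (univ : Set U)) := hY.prod isCompact_univ
  have hint : ∀ l {q : EuclideanSpace ℝ (Fin m) × U → ℝ}, Continuous q → Integrable q (γl l) :=
    fun l _ hq =>
      have := hγlprob l
      hq.integrable_of_measure_compl_eq_zero hK (hγlsupp l)
  have hφ_fst : Continuous fun p : EuclideanSpace ℝ (Fin m) × U => φ p.1 :=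
    hφ.continuous.comp continuous_fst
  have hgen : Continuous fun p : EuclideanSpace ℝ (Fin m) × U => fderiv ℝ φ p.1 (f p.1 p.2) :=
    ((hφ.continuous_fderiv one_ne_zero).comp continuous_fst).clm_apply hf
  refine (hconv (fun p => φ p.1 - φ y0) (hφ_fst.sub continuous_const)).congr fun l => ?_
  rw [integral_smul_inv_measure_eq_neg_of_integral_add_mul_eq_zero (hint l hgen)
    (hint l (q := fun p => φ y0 - φ p.1) (continuous_const.sub hφ_fst)) (hlampos l)
    (hγlW l φ hφ), ← integral_neg]
  simp only [neg_sub]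

/-- Discounted limit inclusion: if γ_l ∈ W(λ_l, y₀), λ_l → 0⁺ and γ_l → γ weak*,
then γ ∈ W₂(y₀); in particular limsup_{λ→0} W(λ,y₀) ⊆ W₂(y₀). -/
theorem limsup_discounted_W_subset_W2
    {m : ℕ} {U : Type} [MetricSpace U] [CompactSpace U] [MeasurableSpace U] [BorelSpace U]
    (Y : Set (EuclideanSpace ℝ (Fin m))) (hY : IsCompact Y)
    (f : EuclideanSpace ℝ (Fin m) → U → EuclideanSpace ℝ (Fin m))
    (hf : Continuous (fun p : EuclideanSpace ℝ (Fin m) × U => f p.1 p.2))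
    (y0 : EuclideanSpace ℝ (Fin m)) (hy0 : y0 ∈ Y)
    (lam : ℕ → ℝ) (hlampos : ∀ l, 0 < lam l) (hlam : Tendsto lam atTop (𝓝 0))
    (γl : ℕ → Measure (EuclideanSpace ℝ (Fin m) × U))
    (hγlprob : ∀ l, IsProbabilityMeasure (γl l))
    (hγlsupp : ∀ l, (γl l) ((Y ×ˢ (univ : Set U))ᶜ) = 0)
    -- γ_l ∈ W(λ_l, y₀)
    (hγlW : ∀ l, ∀ φ : EuclideanSpace ℝ (Fin m) → ℝ, ContDiff ℝ 1 φ →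
      ∫ p, (fderiv ℝ φ p.1 (f p.1 p.2) + lam l * (φ y0 - φ p.1)) ∂(γl l) = 0)
    (γ : Measure (EuclideanSpace ℝ (Fin m) × U)) (hγprob : IsProbabilityMeasure γ)
    -- weak* convergence γ_l → γ
    (hconv : ∀ q : EuclideanSpace ℝ (Fin m) × U → ℝ, Continuous q →
      Tendsto (fun l => ∫ p, q p ∂(γl l)) atTop (𝓝 (∫ p, q p ∂γ)))
    -- the limit lies in W (known, and may be assumed)
    (hγW : γ ((Y ×ˢ (univ : Set U))ᶜ) = 0 ∧
      ∀ φ : EuclideanSpace ℝ (Fin m) → ℝ, ContDiff ℝ 1 φ →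
        ∫ p, fderiv ℝ φ p.1 (f p.1 p.2) ∂γ = 0) :
    -- γ ∈ W₂(y₀)
    ∃ ξ : ℕ → Measure (EuclideanSpace ℝ (Fin m) × U),
      (∀ l, IsFiniteMeasure (ξ l)) ∧
      ∀ φ : EuclideanSpace ℝ (Fin m) → ℝ, ContDiff ℝ 1 φ →
        Tendsto (fun l => ∫ p, fderiv ℝ φ p.1 (f p.1 p.2) ∂(ξ l)) atTop
          (𝓝 (∫ p, (φ p.1 - φ y0) ∂γ)) :=
  limsup_discounted_W_subset_W2_general Y hY f hf y0 lam hlampos γl hγlprob hγlsupp hγlW γ hconv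
end

section
/- Support localization: under Assumption III, if y₀ ∈ Y_z ∩ Y and γ ∈ W₂(y₀), then the support of γ is contained in Y_z × U; consequently W₂(y₀) ⊂ 𝒲(z) := {γ ∈ W : supp(γ) ⊂ Y_z × U}. -/
/-!
The function `Ψ_z = ∑ i, (F i - z i)²` is a first integral of `f` on `Y` and vanishes at `y₀`,
so the defining limit of `W₂(y₀)` is identically zero for `φ = Ψ_z`, which gives `∫ Ψ_z dγ = 0`.
Being nonnegative, `Ψ_z` then vanishes `γ`-almost everywhere, i.e. `γ` lives on `{F = z}`.
-/

open MeasureTheory Filter Topology Set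

section LevelDefect

variable {E ι : Type*} [Fintype ι]

/-- The paper's `Ψ_z`. -/
def levelDefect (F : ι → E → ℝ) (z : ι → ℝ) (y : E) : ℝ :=
  ∑ i, (F i y - z i) ^ 2

lemma levelDefect_nonneg (F : ι → E → ℝ) (z : ι → ℝ) (y : E) : 0 ≤ levelDefect F z y :=
  Finset.sum_nonneg fun _ _ => sq_nonneg _

lemma levelDefect_eq_zero_iff {F : ι → E → ℝ} {z : ι → ℝ} {y : E} :
    levelDefect F z y = 0 ↔ ∀ i, F i y = z i := by
  rw [levelDefect, Finset.sum_eq_zero_iff_of_nonneg fun i _ => sq_nonneg _]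
  simp [sub_eq_zero]

lemma contDiff_levelDefect [NormedAddCommGroup E] [NormedSpace ℝ E] {n : WithTop ℕ∞}
    {F : ι → E → ℝ} (hF : ∀ i, ContDiff ℝ n (F i)) (z : ι → ℝ) : ContDiff ℝ n (levelDefect F z) :=
  ContDiff.sum fun i _ => ((hF i).sub contDiff_const).pow 2

lemma fderiv_levelDefect_apply [NormedAddCommGroup E] [NormedSpace ℝ E] {F : ι → E → ℝ} {y : E}
    (hF : ∀ i, DifferentiableAt ℝ (F i) y) (z : ι → ℝ) (v : E) :
    fderiv ℝ (levelDefect F z) y v = ∑ i, 2 * (F i y - z i) * fderiv ℝ (F i) y v := by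
  have hΨ : HasFDerivAt (levelDefect F z)
      (∑ i, (2 * (F i y - z i)) • fderiv ℝ (F i) y) y := by
    refine HasFDerivAt.fun_sum fun i _ => ?_
    simpa using ((hF i).hasFDerivAt.sub_const (z i)).pow 2
  simp [hΨ.fderiv, mul_assoc]

end LevelDefect

lemma integrable_comp_fst_of_isCompact {X V : Type*} [TopologicalSpace X] [MeasurableSpace X]
    [OpensMeasurableSpace X] [MeasurableSpace V] {g : X → ℝ} (hg : Continuous g) {K : Set X}
    (hK : IsCompact K) {μ : Measure (X × V)} [IsFiniteMeasure μ] (hμ : μ (K ×ˢ univ)ᶜ = 0) :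
    Integrable (fun p => g p.1) μ := by
  obtain ⟨C, hC⟩ := hK.exists_bound_of_continuousOn hg.continuousOn
  refine Integrable.of_bound (hg.measurable.comp measurable_fst).aestronglyMeasurable C ?_
  filter_upwards [mem_ae_iff.2 hμ] with p hp
  exact hC p.1 (mem_prod.1 hp).1

theorem W2_support_in_level_set_general
    {m K : ℕ} {U : Type} [MeasurableSpace U]
    (Y : Set (EuclideanSpace ℝ (Fin m))) (hY : IsCompact Y)
    (f : EuclideanSpace ℝ (Fin m) → U → EuclideanSpace ℝ (Fin m))
    (F : Fin K → EuclideanSpace ℝ (Fin m) → ℝ)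
    (hF : ∀ i, ContDiff ℝ 1 (F i))
    (hinv : ∀ i, ∀ y ∈ Y, ∀ u : U, fderiv ℝ (F i) y (f y u) = 0)
    (z : Fin K → ℝ)
    (y0 : EuclideanSpace ℝ (Fin m)) (hy0z : ∀ i, F i y0 = z i)
    (γ : Measure (EuclideanSpace ℝ (Fin m) × U))
    (hγprob : IsProbabilityMeasure γ)
    (hγsupp : γ ((Y ×ˢ (univ : Set U))ᶜ) = 0)
    -- γ ∈ W₂(y₀): approximating representing measures ξ_l ∈ ℳ₊(Y×U)
    (ξ : ℕ → Measure (EuclideanSpace ℝ (Fin m) × U))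
    (hξsupp : ∀ l, (ξ l) ((Y ×ˢ (univ : Set U))ᶜ) = 0)
    (hW2 : ∀ φ : EuclideanSpace ℝ (Fin m) → ℝ, ContDiff ℝ 1 φ →
      Tendsto (fun l => ∫ p, fderiv ℝ φ p.1 (f p.1 p.2) ∂(ξ l)) atTop
        (𝓝 (∫ p, (φ p.1 - φ y0) ∂γ))) :
    γ {p : EuclideanSpace ℝ (Fin m) × U | ¬ ∀ i, F i p.1 = z i} = 0 := by
  set Ψ := levelDefect F z
  have hΨ : ContDiff ℝ 1 Ψ := contDiff_levelDefect hF z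
  have hflow : ∀ y ∈ Y, ∀ u, fderiv ℝ Ψ y (f y u) = 0 := fun y hy u => by
    simp [Ψ, fderiv_levelDefect_apply (fun i => (hF i).differentiable one_ne_zero y), hinv _ y hy]
  have hξ : ∀ l, ∫ p, fderiv ℝ Ψ p.1 (f p.1 p.2) ∂(ξ l) = 0 := fun l => by
    have hYξ : ∀ᵐ p ∂(ξ l), p ∈ Y ×ˢ univ := mem_ae_iff.2 (hξsupp l)
    exact integral_eq_zero_of_ae <| hYξ.mono fun p hp => hflow p.1 (mem_prod.1 hp).1 p.2
  have hγΨ : ∫ p, Ψ p.1 ∂γ = 0 := by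
    have h := tendsto_nhds_unique (hW2 Ψ hΨ) (by simp only [hξ]; exact tendsto_const_nhds)
    simpa [Ψ, levelDefect_eq_zero_iff.2 hy0z] using h
  -- Compactness of `Y` is needed here: the Bochner integral of a non-integrable function is `0`.
  have hΨint : Integrable (fun p => Ψ p.1) γ :=
    integrable_comp_fst_of_isCompact (V := U) hΨ.continuous hY hγsupp
  have hΨnonneg : 0 ≤ fun p : EuclideanSpace ℝ (Fin m) × U => Ψ p.1 :=
    fun p => levelDefect_nonneg F z p.1
  have hΨ0 := (integral_eq_zero_iff_of_nonneg hΨnonneg hΨint).1 hγΨ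
  exact ae_iff.1 (hΨ0.mono fun p hp => levelDefect_eq_zero_iff.1 hp)

/-- Support localization: under Assumption III, if y₀ ∈ Y_z ∩ Y and γ ∈ W₂(y₀), then
γ is supported in Y_z × U (hence W₂(y₀) ⊆ 𝒲(z)). -/
theorem W2_support_in_level_set
    {m K : ℕ} {U : Type} [MetricSpace U] [CompactSpace U] [MeasurableSpace U] [BorelSpace U]
    (Y : Set (EuclideanSpace ℝ (Fin m))) (hY : IsCompact Y)
    (f : EuclideanSpace ℝ (Fin m) → U → EuclideanSpace ℝ (Fin m))
    (hf : Continuous (fun p : EuclideanSpace ℝ (Fin m) × U => f p.1 p.2))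
    (F : Fin K → EuclideanSpace ℝ (Fin m) → ℝ)
    (hF : ∀ i, ContDiff ℝ 1 (F i))
    (hinv : ∀ i, ∀ y ∈ Y, ∀ u : U, fderiv ℝ (F i) y (f y u) = 0)
    (z : Fin K → ℝ)
    (y0 : EuclideanSpace ℝ (Fin m)) (hy0 : y0 ∈ Y) (hy0z : ∀ i, F i y0 = z i)
    (γ : Measure (EuclideanSpace ℝ (Fin m) × U))
    (hγprob : IsProbabilityMeasure γ)
    (hγsupp : γ ((Y ×ˢ (univ : Set U))ᶜ) = 0)
    -- γ ∈ W
    (hγW : ∀ φ : EuclideanSpace ℝ (Fin m) → ℝ, ContDiff ℝ 1 φ →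
      ∫ p, fderiv ℝ φ p.1 (f p.1 p.2) ∂γ = 0)
    -- γ ∈ W₂(y₀): approximating representing measures ξ_l ∈ ℳ₊(Y×U)
    (ξ : ℕ → Measure (EuclideanSpace ℝ (Fin m) × U))
    (hξfin : ∀ l, IsFiniteMeasure (ξ l))
    (hξsupp : ∀ l, (ξ l) ((Y ×ˢ (univ : Set U))ᶜ) = 0)
    (hW2 : ∀ φ : EuclideanSpace ℝ (Fin m) → ℝ, ContDiff ℝ 1 φ →
      Tendsto (fun l => ∫ p, fderiv ℝ φ p.1 (f p.1 p.2) ∂(ξ l)) atTop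
        (𝓝 (∫ p, (φ p.1 - φ y0) ∂γ))) :
    γ {p : EuclideanSpace ℝ (Fin m) × U | ¬ ∀ i, F i p.1 = z i} = 0 :=
  W2_support_in_level_set_general Y hY f F hF hinv z y0 hy0z γ hγprob hγsupp ξ hξsupp hW2
end
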